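/- Let 0 < p ≤ 1 and let 𝒜 be a unital C*-algebra. For A, B ∈ 𝒜⁺⁺ there exists X ∈ 𝒜⁺⁺ with A 𝔪ₚ X = 2^{-1/p} B if and only if the spectrum of B^{-1/2} A B^{-1/2} is contained in the open interval ]0,1[ (i.e. A < B in the strict order). -/

import Mathlib

/-!
Conjugating by `a^(-1/2)` turns the equation into `((1 + c^p)/2)^(1/p) = 2^(-1/p) d` with
`c = a^(-1/2) x a^(-1/2)` and `d = a^(-1/2) b a^(-1/2)`, that is, into `c^p = d^p - 1`. As `c ↦ c^p`
is a bijection of the positive definite cone, a solution exists iff `d^p - 1` is positive definite,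
i.e. iff the spectrum of `d` lies in `]1, ∞[`. Finally `b^(-1/2) a b^(-1/2)` is similar to
`a b⁻¹ = (b a⁻¹)⁻¹` and `d` is similar to `b a⁻¹`, so their spectra are pointwise inverse.
-/

open scoped NNReal

/-- The positive definite cone of a unital C*-algebra: the invertible positive elements. -/
def posDefCone (A : Type*) [CStarAlgebra A] [PartialOrder A] [StarOrderedRing A] : Set A :=
  {a : A | 0 ≤ a ∧ IsUnit a}

variable {A : Type*} [CStarAlgebra A] [PartialOrder A] [StarOrderedRing A]

/-- The Kubo–Ando `p`-th power mean
`a^(1/2) ((1 + (a^(-1/2) b a^(-1/2))^p)/2)^(1/p) a^(1/2)` on the positive definite cone. -/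
noncomputable def kuboAndoPowerMean (p : ℝ) (a b : A) : A :=
  a ^ ((2 : ℝ)⁻¹) *
    ((2 : ℝ)⁻¹ • (1 + (a ^ (-(2 : ℝ)⁻¹) * b * a ^ (-(2 : ℝ)⁻¹)) ^ p)) ^ p⁻¹ *
    a ^ ((2 : ℝ)⁻¹)

open CFC

lemma mem_posDefCone {a : A} : a ∈ posDefCone A ↔ IsStrictlyPositive a := Iff.rfl

namespace CFC

lemma smul_rpow {r : ℝ} (hr : 0 ≤ r) {a : A} {y : ℝ} (hy : 0 ≤ y) (ha : 0 ≤ a := by cfc_tac) :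
    (r • a) ^ y = r ^ y • a ^ y := by
  lift r to ℝ≥0 using hr
  have hcont : Continuous (fun x : ℝ≥0 => x ^ y) := NNReal.continuous_rpow_const hy
  rw [← NNReal.coe_rpow, ← NNReal.smul_def, ← NNReal.smul_def, rpow_def, rpow_def,
    ← cfc_comp_smul r _ a, ← cfc_smul (r ^ y) _ a]
  exact cfc_congr fun x _ => by simp [smul_eq_mul, NNReal.mul_rpow]

lemma rpow_inv_eq_iff {p : ℝ} (hp : p ≠ 0) {a b : A} (ha : IsStrictlyPositive a)
    (hb : IsStrictlyPositive b) : a ^ p⁻¹ = b ↔ a = b ^ p :=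
  ⟨fun h => h ▸ (rpow_inv_rpow a p hp).symm, fun h => h ▸ rpow_rpow_inv b p hp⟩

lemma rpow_mul_conj_mul_rpow {a : A} (ha : IsStrictlyPositive a) (y : ℝ) (x : A) :
    a ^ y * (a ^ (-y) * x * a ^ (-y)) * a ^ y = x := by
  simp only [← mul_assoc, rpow_mul_rpow_neg y ha, one_mul]
  rw [mul_assoc, rpow_neg_mul_rpow y ha, mul_one]

lemma rpow_neg_half_mul_self (a : Aˣ) (ha : 0 ≤ (a : A)) :
    (a : A) ^ (-(2 : ℝ)⁻¹) * (a : A) ^ (-(2 : ℝ)⁻¹) = ↑a⁻¹ := by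
  rw [← rpow_add a.isUnit]
  norm_num
  exact rpow_neg_one_eq_inv a ha

end CFC

lemma spectrum_mul_mul_self {R B : Type*} [CommSemiring R] [Ring B] [Algebra R B] {x : B}
    (hx : IsUnit x) (y : B) :
    spectrum R (x * y * x) = spectrum R (y * (x * x)) := by
  lift x to Bˣ using hx
  rw [← spectrum.units_conjugate (a := y * (x * x)) (u := x)]
  simp only [mul_assoc, Units.mul_inv, mul_one]

lemma spectrum_conj_rpow_neg_half_eq_inv {a b : A} (ha : IsStrictlyPositive a)
    (hb : IsStrictlyPositive b) :
    spectrum ℝ (b ^ (-(2 : ℝ)⁻¹) * a * b ^ (-(2 : ℝ)⁻¹)) =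
      (spectrum ℝ (a ^ (-(2 : ℝ)⁻¹) * b * a ^ (-(2 : ℝ)⁻¹)))⁻¹ := by
  lift a to Aˣ using ha.isUnit
  lift b to Aˣ using hb.isUnit
  rw [spectrum_mul_mul_self (hb.isUnit.cfcRpow _), spectrum_mul_mul_self (ha.isUnit.cfcRpow _),
    rpow_neg_half_mul_self a ha.nonneg, rpow_neg_half_mul_self b hb.nonneg,
    ← Units.val_mul, ← Units.val_mul, spectrum.map_inv, mul_inv_rev, inv_inv]

lemma isStrictlyPositive_rpow_sub_one_iff {d : A} (hd : IsStrictlyPositive d) {p : ℝ} (hp : 0 < p) :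
    IsStrictlyPositive (d ^ p - 1) ↔ spectrum ℝ d ⊆ Set.Ioi 1 := by
  have hcont : Continuous (fun x : ℝ => x ^ p) := Real.continuous_rpow_const hp.le
  rw [rpow_eq_cfc_real hd.nonneg, ← cfc_one ℝ d, ← cfc_sub _ _ d hcont.continuousOn,
    cfc_isStrictlyPositive_iff _ d]
  refine forall₂_congr fun x hx => ?_
  rw [Pi.one_apply, sub_pos, Set.mem_Ioi, Real.one_lt_rpow_iff_of_pos (hd.spectrum_pos hx)]
  simp [hp, hp.not_gt]

lemma exists_isStrictlyPositive_conj_iff {s : A} (hs : IsStrictlyPositive s) (P : A → Prop) :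
    (∃ x, IsStrictlyPositive x ∧ P (s * x * s)) ↔ ∃ c, IsStrictlyPositive c ∧ P c := by
  refine ⟨fun ⟨x, hx, hP⟩ => ⟨s * x * s, ?_, hP⟩,
    fun ⟨c, hc, hP⟩ => ⟨Ring.inverse s * c * Ring.inverse s, ?_, ?_⟩⟩
  · exact .conjugate_of_isUnit_of_isSelfAdjoint x s hs.isUnit hs.isSelfAdjoint hx
  · exact .conjugate_of_isUnit_of_isSelfAdjoint c _ hs.ringInverse.isUnit
      hs.ringInverse.isSelfAdjoint hc
  · rwa [← mul_assoc, ← mul_assoc, Ring.mul_inverse_cancel s hs.isUnit, one_mul, mul_assoc,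
      Ring.inverse_mul_cancel s hs.isUnit, mul_one]

lemma exists_isStrictlyPositive_rpow_eq_iff {p : ℝ} (hp : p ≠ 0) (w : A) :
    (∃ c, IsStrictlyPositive c ∧ c ^ p = w) ↔ IsStrictlyPositive w :=
  ⟨fun ⟨c, hc, h⟩ => h ▸ IsStrictlyPositive.rpow c p hc,
    fun hw => ⟨w ^ p⁻¹, IsStrictlyPositive.rpow w p⁻¹ hw, rpow_inv_rpow w p hp⟩⟩

lemma kuboAndoPowerMean_eq_smul_iff {a : A} (ha : IsStrictlyPositive a) (p r : ℝ) (x b : A) :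
    kuboAndoPowerMean p a x = r • b ↔
      ((2 : ℝ)⁻¹ • (1 + (a ^ (-(2 : ℝ)⁻¹) * x * a ^ (-(2 : ℝ)⁻¹)) ^ p)) ^ p⁻¹ =
        r • (a ^ (-(2 : ℝ)⁻¹) * b * a ^ (-(2 : ℝ)⁻¹)) := by
  have ht : IsUnit (a ^ (2 : ℝ)⁻¹) := ha.isUnit.cfcRpow _
  conv_lhs => rw [← rpow_mul_conj_mul_rpow ha (2 : ℝ)⁻¹ b, ← smul_mul_assoc, ← mul_smul_comm]
  rw [kuboAndoPowerMean, ht.mul_left_inj, ht.mul_right_inj]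

lemma half_smul_one_add_rpow_rpow_inv_eq_iff {p : ℝ} (hp : 0 < p) (c : A) {d : A}
    (hd : IsStrictlyPositive d) :
    ((2 : ℝ)⁻¹ • (1 + c ^ p)) ^ p⁻¹ = (2 : ℝ) ^ (-p⁻¹) • d ↔ c ^ p = d ^ p - 1 := by
  have hmean : IsStrictlyPositive ((2 : ℝ)⁻¹ • (1 + c ^ p)) :=
    .smul (by norm_num) (isStrictlyPositive_one.add_nonneg rpow_nonneg)
  have hscale : ((2 : ℝ) ^ (-p⁻¹)) ^ p = 2⁻¹ := by
    rw [← Real.rpow_mul zero_le_two, neg_mul, inv_mul_cancel₀ hp.ne', Real.rpow_neg_one]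
  rw [rpow_inv_eq_iff hp.ne' hmean (.smul (by positivity) hd),
    smul_rpow (by positivity) hp.le hd.nonneg, hscale,
    smul_right_inj (by norm_num), eq_sub_iff_add_eq']

theorem kuboAndo_solvable_iff_strict_lt_general (p : ℝ) (hp0 : 0 < p)
    {a b : A} (ha : a ∈ posDefCone A) (hb : b ∈ posDefCone A) :
    (∃ x ∈ posDefCone A, kuboAndoPowerMean p a x = ((2 : ℝ) ^ (-p⁻¹)) • b) ↔
    spectrum ℝ (b ^ (-(2 : ℝ)⁻¹) * a * b ^ (-(2 : ℝ)⁻¹)) ⊆ Set.Ioo (0 : ℝ) 1 := by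
  set s := a ^ (-(2 : ℝ)⁻¹)
  set d := s * b * s
  have hs : IsStrictlyPositive s := IsStrictlyPositive.rpow a _ ha
  have hd : IsStrictlyPositive d :=
    .conjugate_of_isUnit_of_isSelfAdjoint b s hs.isUnit hs.isSelfAdjoint hb
  calc (∃ x ∈ posDefCone A, kuboAndoPowerMean p a x = ((2 : ℝ) ^ (-p⁻¹)) • b)
      ↔ ∃ x, IsStrictlyPositive x ∧
          ((2 : ℝ)⁻¹ • (1 + (s * x * s) ^ p)) ^ p⁻¹ = (2 : ℝ) ^ (-p⁻¹) • d := by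
        simp only [mem_posDefCone, kuboAndoPowerMean_eq_smul_iff ha]
        rfl
    _ ↔ ∃ c, IsStrictlyPositive c ∧ c ^ p = d ^ p - 1 := by
        simp only [half_smul_one_add_rpow_rpow_inv_eq_iff hp0 _ hd]
        exact exists_isStrictlyPositive_conj_iff hs fun c => c ^ p = d ^ p - 1
    _ ↔ spectrum ℝ d ⊆ Set.Ioi 1 := by
        rw [exists_isStrictlyPositive_rpow_eq_iff hp0.ne',
          isStrictlyPositive_rpow_sub_one_iff hd hp0]
    _ ↔ _ := by
        rw [spectrum_conj_rpow_neg_half_eq_inv ha hb, Set.inv_subset, Set.inv_Ioo_0_left one_pos,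
          inv_one]

/-- For `0 < p ≤ 1` and positive definite `a, b` in a unital C*-algebra,
the equation `a 𝔪ₚ x = 2^(-1/p) b` has a positive definite solution `x` iff the spectrum of
`b^(-1/2) a b^(-1/2)` is contained in the open interval `]0,1[`. -/
theorem kuboAndo_solvable_iff_strict_lt (p : ℝ) (hp0 : 0 < p) (hp1 : p ≤ 1)
    {a b : A} (ha : a ∈ posDefCone A) (hb : b ∈ posDefCone A) :
    (∃ x ∈ posDefCone A, kuboAndoPowerMean p a x = ((2 : ℝ) ^ (-p⁻¹)) • b) ↔
    spectrum ℝ (b ^ (-(2 : ℝ)⁻¹) * a * b ^ (-(2 : ℝ)⁻¹)) ⊆ Set.Ioo (0 : ℝ) 1 :=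
  kuboAndo_solvable_iff_strict_lt_general p hp0 ha hb
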